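/- Let R be an integral domain with finite quotients, K = Frac(R), and θ the affine partial action of K ⋊ K× on R̂_K. Then θ is topologically free (for each g ≠ (0,1), the fixed-point set F_g = {x ∈ R̂_{g⁻¹} : θ_g(x) = x} has empty interior) if and only if R is not a field. -/
import Mathlib


set_option linter.unusedSectionVars false
set_option linter.unusedVariables false

variable (R : Type*) [CommRing R] [IsDomain R]
variable (K : Type*) [Field K] [Algebra R K] [IsFractionRing R K]

/-- The fractional ideal `(w) = wR ⊆ K`, as an additive subgroup of `K`. -/
def Jw (w : K) : AddSubgroup K := (Submodule.span R {w}).toAddSubgroup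

theorem Jw_le {w w' : K} (h : ∃ r : R, w' = w * algebraMap R K r) :
    Jw R K w' ≤ Jw R K w := by
  obtain ⟨r, rfl⟩ := h
  intro x hx
  have hsub : Submodule.span R {w * algebraMap R K r} ≤ Submodule.span R {w} := by
    rw [Submodule.span_le, Set.singleton_subset_iff]
    rw [mul_comm, ← Algebra.smul_def]
    exact Submodule.smul_mem _ _ (Submodule.mem_span_singleton_self w)
  exact hsub hx

/-- The canonical projection `K/(w') → K/(w)` when `w ∣ w'`; on classes of elements of
`R + (w')` this is the canonical projection `p_{w,w'} : (R+(w'))/(w') → (R+(w))/(w)`. -/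
def projw (w w' : K) (h : ∃ r : R, w' = w * algebraMap R K r) :
    K ⧸ Jw R K w' →+ K ⧸ Jw R K w :=
  QuotientAddGroup.map _ _ (AddMonoidHom.id K) (fun x hx => Jw_le R K h hx)

/-- Each quotient `K/(w)` (hence each `(R+(w))/(w)`) carries the discrete topology. -/
instance (w : K) : TopologicalSpace (K ⧸ Jw R K w) := ⊥

/-- The profinite completion `R̂_K = lim← (R+(w))/(w)` over `w ∈ K×` (with the
divisibility order `w ≤ w' ↔ ∃ r ∈ R, w' = wr`), realised inside `Π_{w ∈ K×} K/(w)` as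
the families of classes of elements of `R` compatible under the projections; the class
in `K/(w)` of an element `u_w ∈ R + (w)` records the element `u_w + (w)` of
`(R+(w))/(w)`. -/
abbrev RhatK := {x : ∀ w : {w : K // w ≠ 0}, K ⧸ Jw R K w.1 //
  (∀ w : {w : K // w ≠ 0}, ∃ r : R, x w = QuotientAddGroup.mk (algebraMap R K r)) ∧
  ∀ (w w' : {w : K // w ≠ 0}) (h : ∃ r : R, w'.1 = w.1 * algebraMap R K r),
    projw R K w.1 w'.1 h (x w') = x w}

/- ### Auxiliary lemmas -/

lemma projw_mk (w w' : K) (h : ∃ r : R, w' = w * algebraMap R K r) (z : K) :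
    projw R K w w' h (QuotientAddGroup.mk z) = QuotientAddGroup.mk z :=
  rfl

lemma jw_eq_top (hF : IsField R) {w : K} (hw : w ≠ 0) : Jw R K w = ⊤ := by
  rw [eq_top_iff]
  intro x _
  obtain ⟨⟨a, b⟩, hab⟩ := IsLocalization.surj (nonZeroDivisors R) (x / w)
  obtain ⟨c, hbc⟩ := hF.mul_inv_cancel (nonZeroDivisors.ne_zero b.2)
  have hxw : x / w = algebraMap R K (a * c) := by
    have h1 : (x / w) * algebraMap R K ((b : R) * c) = algebraMap R K (a * c) := by
      rw [map_mul, map_mul, ← mul_assoc, hab]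
    rwa [hbc, map_one, mul_one] at h1
  have h2 : x = (a * c) • w := by
    rw [Algebra.smul_def, ← hxw, div_mul_cancel₀ _ hw]
  rw [h2]
  exact Submodule.smul_mem _ _ (Submodule.mem_span_singleton_self w)

lemma quot_eq (hF : IsField R) {w : K} (hw : w ≠ 0) (a b : K ⧸ Jw R K w) : a = b := by
  have htop := jw_eq_top R K hF hw
  induction a using QuotientAddGroup.induction_on with
  | H a =>
  induction b using QuotientAddGroup.induction_on with
  | H b =>
  exact (QuotientAddGroup.eq).mpr (by rw [htop]; trivial)

lemma cancel_lemma {m c : R} (hne : m * c ≠ 1) {A : K} (hA : A ≠ 0)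
    (h : c • (A * algebraMap R K m) = A) : False := by
  apply hne
  rw [Algebra.smul_def] at h
  have h2 : A * algebraMap R K (m * c) = A * 1 := by
    rw [map_mul, mul_one]; linear_combination h
  have h3 := mul_left_cancel₀ hA h2
  rw [← map_one (algebraMap R K)] at h3
  exact IsFractionRing.injective R K h3

/-- The affine partial action `θ` of `K ⋊ K×` on `R̂_K` is
topologically free — i.e. for every `g = (u,w) ≠ (0,1)` the fixed-point set
`F_g = {x ∈ R̂_{g⁻¹} : θ_g(x) = x}` has empty interior — if and only if `R` is not a
field. -/
theorem stmt18 (hfin : ∀ m : R, m ≠ 0 → Finite (R ⧸ Ideal.span {m})) :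
    (∀ (u w : K) (hw : w ≠ 0), ¬(u = 0 ∧ w = 1) →
      interior {x : RhatK R K |
        -- `x` lies in the domain `R̂_{(u,w)⁻¹}`, `(u,w)⁻¹ = (-u/w, w⁻¹)`
        x.1 ⟨w⁻¹, inv_ne_zero hw⟩ = (QuotientAddGroup.mk (-u / w) : K ⧸ Jw R K w⁻¹) ∧
        -- `θ_{(u,w)}(x) = x`: for every `w'`, `x_{w'} = u + w·x_{w⁻¹w'} + (w')`
        ∀ (w' : K) (hw' : w' ≠ 0) (v : K),
          x.1 ⟨w⁻¹ * w', mul_ne_zero (inv_ne_zero hw) hw'⟩ =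
            (QuotientAddGroup.mk v : K ⧸ Jw R K (w⁻¹ * w')) →
          x.1 ⟨w', hw'⟩ = (QuotientAddGroup.mk (u + w * v) : K ⧸ Jw R K w')} = ∅) ↔
    ¬IsField R := by
  constructor
  · -- if topologically free then R is not a field
    intro H hF
    have hemp := H 1 1 one_ne_zero (fun h => one_ne_zero h.1)
    have hS : {x : RhatK R K |
        x.1 ⟨(1:K)⁻¹, inv_ne_zero one_ne_zero⟩ =
          (QuotientAddGroup.mk (-(1:K) / 1) : K ⧸ Jw R K (1:K)⁻¹) ∧
        ∀ (w' : K) (hw' : w' ≠ 0) (v : K),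
          x.1 ⟨(1:K)⁻¹ * w', mul_ne_zero (inv_ne_zero one_ne_zero) hw'⟩ =
            (QuotientAddGroup.mk v : K ⧸ Jw R K ((1:K)⁻¹ * w')) →
          x.1 ⟨w', hw'⟩ = (QuotientAddGroup.mk (1 + 1 * v) : K ⧸ Jw R K w')} = Set.univ := by
      apply Set.eq_univ_of_forall
      intro x
      refine ⟨quot_eq R K hF (inv_ne_zero one_ne_zero) _ _, fun w' hw' v _ =>
        quot_eq R K hF hw' _ _⟩
    rw [hS, interior_univ] at hemp
    -- but R̂_K is nonempty
    have x0 : RhatK R K :=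
      ⟨fun _ => 0, fun v => ⟨0, by rw [map_zero, QuotientAddGroup.mk_zero]⟩,
        fun a b h => map_zero _⟩
    exact (Set.eq_empty_iff_forall_notMem.mp hemp x0) trivial
  · -- if R is not a field then topologically free
    intro hnf u w hw hne
    classical
    obtain ⟨m, hm0, hmnu⟩ : ∃ m : R, m ≠ 0 ∧ ∀ b, m * b ≠ 1 := by
      by_contra h
      push_neg at h
      exact hnf ⟨exists_pair_ne R, mul_comm, fun {a} ha => h a ha⟩
    have hmK : algebraMap R K m ≠ 0 :=
      (map_ne_zero_iff _ (IsFractionRing.injective R K)).mpr hm0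
    by_contra hint
    obtain ⟨x, hx⟩ := Set.nonempty_iff_ne_empty.mpr hint
    rw [mem_interior] at hx
    obtain ⟨U, hUF, hUopen, hxU⟩ := hx
    rw [isOpen_induced_iff] at hUopen
    obtain ⟨V, hVopen, rfl⟩ := hUopen
    rw [isOpen_pi_iff] at hVopen
    obtain ⟨I, us, hus, hpi⟩ := hVopen x.1 hxU
    have hxF := hUF hxU
    by_cases hw1 : w = 1
    · -- case w = 1 : the fixed point set itself is empty
      subst hw1
      have hu0 : u ≠ 0 := fun h => hne ⟨h, rfl⟩
      have hw'0 : u * algebraMap R K m ≠ 0 := mul_ne_zero hu0 hmK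
      obtain ⟨r, hr⟩ := x.2.1 ⟨(1:K)⁻¹ * (u * algebraMap R K m),
        mul_ne_zero (inv_ne_zero one_ne_zero) hw'0⟩
      have h2 := hxF.2 (u * algebraMap R K m) hw'0 (algebraMap R K r) hr
      have hcoh := x.2.2 ⟨u * algebraMap R K m, hw'0⟩
        ⟨(1:K)⁻¹ * (u * algebraMap R K m), mul_ne_zero (inv_ne_zero one_ne_zero) hw'0⟩
        ⟨1, by simp⟩
      rw [hr, projw_mk] at hcoh
      rw [h2] at hcoh
      have hmem := QuotientAddGroup.eq.mp hcoh
      have h3 : -(algebraMap R K r) + (u + 1 * algebraMap R K r) = u := by ring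
      rw [h3] at hmem
      have hs : u ∈ Submodule.span R {u * algebraMap R K m} := hmem
      obtain ⟨c, hc⟩ := Submodule.mem_span_singleton.mp hs
      exact cancel_lemma R K (hmnu c) hu0 hc
    · -- case w ≠ 1 : shift x by a suitable nonzero t ∈ R
      choose p hp using fun i : {w : K // w ≠ 0} =>
        IsLocalization.surj (M := nonZeroDivisors R) (S := K) i.1
      have hp1 : ∀ i : {w : K // w ≠ 0}, (p i).1 ≠ 0 := by
        intro i h
        have h1 := hp i
        rw [h, map_zero] at h1
        have h2 : algebraMap R K ((p i).2 : R) ≠ 0 :=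
          (map_ne_zero_iff _ (IsFractionRing.injective R K)).mpr
            (nonZeroDivisors.ne_zero (p i).2.2)
        exact i.2 ((mul_eq_zero.mp h1).resolve_right h2)
      set t : R := ∏ i ∈ I, (p i).1 with ht
      have ht0 : t ≠ 0 := Finset.prod_ne_zero_iff.mpr (fun i _ => hp1 i)
      have htK : algebraMap R K t ≠ 0 :=
        (map_ne_zero_iff _ (IsFractionRing.injective R K)).mpr ht0
      have hti : ∀ i ∈ I, algebraMap R K t ∈ Jw R K i.1 := by
        intro i hi
        have heq : algebraMap R K t =
            (((p i).2 : R) * ∏ j ∈ I.erase i, (p j).1) • i.1 := by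
          rw [Algebra.smul_def, ht, ← Finset.mul_prod_erase I _ hi, map_mul, map_mul,
            ← hp i]
          ring
        rw [heq]
        exact Submodule.smul_mem _ _ (Submodule.mem_span_singleton_self i.1)
      -- the shifted element y = x + t
      have hy1 : ∀ i : {w : K // w ≠ 0}, ∃ r : R,
          x.1 i + (QuotientAddGroup.mk (algebraMap R K t) : K ⧸ Jw R K i.1) =
            QuotientAddGroup.mk (algebraMap R K r) := by
        intro i
        obtain ⟨r, hr⟩ := x.2.1 i
        exact ⟨r + t, by rw [hr, map_add]; rfl⟩
      have hy2 : ∀ (a b : {w : K // w ≠ 0}) (h : ∃ r : R, b.1 = a.1 * algebraMap R K r),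
          projw R K a.1 b.1 h
              (x.1 b + (QuotientAddGroup.mk (algebraMap R K t) : K ⧸ Jw R K b.1)) =
            x.1 a + (QuotientAddGroup.mk (algebraMap R K t) : K ⧸ Jw R K a.1) := by
        intro a b h
        rw [map_add, x.2.2 a b h, projw_mk]
      set y : RhatK R K :=
        ⟨fun i => x.1 i + (QuotientAddGroup.mk (algebraMap R K t) : K ⧸ Jw R K i.1),
          hy1, hy2⟩ with hy
      have hyV : y ∈ (Subtype.val ⁻¹' V : Set (RhatK R K)) := by
        apply hpi
        intro i hi
        have h0 : (QuotientAddGroup.mk (algebraMap R K t) : K ⧸ Jw R K i.1) = 0 :=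
          (QuotientAddGroup.eq_zero_iff _).mpr (hti i hi)
        show x.1 i + _ ∈ us i
        rw [h0, add_zero]
        exact (hus i hi).2
      have hyF := hUF hyV
      -- extract the contradiction at coordinate w' = (w-1)·t·m
      have hw'0 : (w - 1) * algebraMap R K t * algebraMap R K m ≠ 0 :=
        mul_ne_zero (mul_ne_zero (sub_ne_zero.mpr hw1) htK) hmK
      obtain ⟨r, hr⟩ := x.2.1 ⟨w⁻¹ * ((w - 1) * algebraMap R K t * algebraMap R K m),
        mul_ne_zero (inv_ne_zero hw) hw'0⟩
      have hx2 := hxF.2 ((w - 1) * algebraMap R K t * algebraMap R K m) hw'0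
        (algebraMap R K r) hr
      have hyr : y.1 ⟨w⁻¹ * ((w - 1) * algebraMap R K t * algebraMap R K m),
          mul_ne_zero (inv_ne_zero hw) hw'0⟩ =
          QuotientAddGroup.mk (algebraMap R K r + algebraMap R K t) := by
        show x.1 _ + _ = _
        rw [hr]; rfl
      have hy2' := hyF.2 ((w - 1) * algebraMap R K t * algebraMap R K m) hw'0
        (algebraMap R K r + algebraMap R K t) hyr
      have hyw' : y.1 ⟨(w - 1) * algebraMap R K t * algebraMap R K m, hw'0⟩ =
          QuotientAddGroup.mk (u + w * algebraMap R K r + algebraMap R K t) := by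
        show x.1 _ + _ = _
        rw [hx2]; rfl
      rw [hyw'] at hy2'
      have hmem := QuotientAddGroup.eq.mp hy2'
      have h3 : -(u + w * algebraMap R K r + algebraMap R K t) +
          (u + w * (algebraMap R K r + algebraMap R K t)) =
          (w - 1) * algebraMap R K t := by ring
      rw [h3] at hmem
      have hs : (w - 1) * algebraMap R K t ∈
          Submodule.span R {(w - 1) * algebraMap R K t * algebraMap R K m} := hmem
      obtain ⟨c, hc⟩ := Submodule.mem_span_singleton.mp hs
      exact cancel_lemma R K (hmnu c) (mul_ne_zero (sub_ne_zero.mpr hw1) htK) hc
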